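/- Failure of strong subadditivity of measurement entropy: let A and B be classical bits (single tests {0,1}) and let C be a squit, the test space {{e,e'},{f,f'}} with all states allowed. Consider the state ω on the tripartite composite (tests: measure both bits and then a squit test possibly depending on the two bit values) given by: ω(a,b,·) assigns, for (a,b) = (0,0): probability 1/4 to e and 1/4 to f; for (0,1): 1/4 to e and 1/4 to f'; for (1,0): 1/4 to e' and 1/4 to f; for (1,1): 1/4 to e' and 1/4 to f' (so the outcome of {e,e'} is perfectly correlated with A and the outcome of {f,f'} with B). Then H(ω^C) = H(ω^{AC}) = H(ω^{BC}) = 1, H(ω) = 2, and hence I(A:B|C) := H(ω^{AC}) + H(ω^{BC}) − H(ω^C) − H(ω) = −1 < 0. -/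

import Mathlib

/-- Local measurement entropy of a state `α` at a test `E` (base-2 logarithm). -/
noncomputable def locEnt {X : Type*} (E : Finset X) (α : X → ℝ) : ℝ :=
  ∑ x ∈ E, -(α x * Real.logb 2 (α x))

/-- Measurement entropy: infimum of local entropies over all tests of the test space. -/
noncomputable def measEnt {X : Type*} (𝔄 : Set (Finset X)) (α : X → ℝ) : ℝ :=
  sInf ((fun E => locEnt E α) '' 𝔄)

/-- The squit test space `{{e,e'},{f,f'}}`, with outcomes `e = 0`, `e' = 1`,
`f = 2`, `f' = 3`. -/
def squit : Set (Finset (Fin 4)) := {({0, 1} : Finset (Fin 4)), ({2, 3} : Finset (Fin 4))}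

/-- Composite of two classical bits `A`, `B` with a squit `C`: tests measure both
bits and then perform a squit test chosen as a function of the two bit values. -/
def testsABC : Set (Finset (Fin 2 × Fin 2 × Fin 4)) :=
  {T | ∃ F : Fin 2 → Fin 2 → Finset (Fin 4), (∀ a b, F a b ∈ squit) ∧
    T = Finset.univ.biUnion fun a => Finset.univ.biUnion fun b =>
      (F a b).image fun c => (a, b, c)}

/-- Composite of the classical bit `A` with the squit `C`. -/
def testsAC : Set (Finset (Fin 2 × Fin 4)) :=
  {T | ∃ F : Fin 2 → Finset (Fin 4), (∀ a, F a ∈ squit) ∧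
    T = Finset.univ.biUnion fun a => (F a).image fun c => (a, c)}

/-- The tripartite state: the outcome of `{e,e'}` is perfectly correlated with the
bit `A` and the outcome of `{f,f'}` is perfectly correlated with the bit `B`. -/
noncomputable def ωABC : Fin 2 × Fin 2 × Fin 4 → ℝ := fun x =>
  if (x.2.2 = 0 ∧ x.1 = 0) ∨ (x.2.2 = 1 ∧ x.1 = 1) ∨
     (x.2.2 = 2 ∧ x.2.1 = 0) ∨ (x.2.2 = 3 ∧ x.2.1 = 1)
  then 1 / 4 else 0

/-- Marginal on the squit `C`. -/
noncomputable def ωC : Fin 4 → ℝ := fun c => ∑ a : Fin 2, ∑ b : Fin 2, ωABC (a, b, c)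

/-- Marginal on `AC`. -/
noncomputable def ωAC : Fin 2 × Fin 4 → ℝ := fun x => ∑ b : Fin 2, ωABC (x.1, b, x.2)

/-- Marginal on `BC`. -/
noncomputable def ωBC : Fin 2 × Fin 4 → ℝ := fun x => ∑ a : Fin 2, ωABC (a, x.1, x.2)

/-!
On a composite whose first stages are classical, the second-stage test may be chosen separately
for each classical outcome, so the infimum defining the measurement entropy splits into a sum of
blockwise infima (`measEnt_twoStage`). For `ω` every block `(a, b)` gives weight `1/4` to exactly
one outcome of either squit test, so each block contributes `1/2` and `H(ω) = 2`. For `ω^{AC}` the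
block of `a` contributes `1/2` through `{e, e'}` and `1` through `{f, f'}`, so `H(ω^{AC}) = 1`, and
symmetrically for `ω^{BC}`; `ω^C` is uniform, so both squit tests give `1`.
-/

open Finset

section MeasurementEntropy

variable {X : Type*}

theorem measEnt_eq_locEnt_of_forall_le {𝔄 : Set (Finset X)} {α : X → ℝ} {E : Finset X}
    (hE : E ∈ 𝔄) (hmin : ∀ E' ∈ 𝔄, locEnt E α ≤ locEnt E' α) :
    measEnt 𝔄 α = locEnt E α :=
  IsLeast.csInf_eq ⟨⟨E, hE, rfl⟩, by rintro _ ⟨E', hE', rfl⟩; exact hmin E' hE'⟩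

theorem exists_measEnt_eq_locEnt {𝔄 : Set (Finset X)} (h𝔄 : 𝔄.Finite) (hne : 𝔄.Nonempty)
    (α : X → ℝ) : ∃ E ∈ 𝔄, measEnt 𝔄 α = locEnt E α ∧ ∀ E' ∈ 𝔄, locEnt E α ≤ locEnt E' α := by
  obtain ⟨E, hE, hmin⟩ := Set.exists_min_image 𝔄 (fun E => locEnt E α) h𝔄 hne
  exact ⟨E, hE, measEnt_eq_locEnt_of_forall_le hE hmin, hmin⟩

theorem measEnt_pair (E₁ E₂ : Finset X) (α : X → ℝ) :
    measEnt {E₁, E₂} α = min (locEnt E₁ α) (locEnt E₂ α) := by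
  rw [measEnt, Set.image_pair, csInf_pair]

theorem locEnt_pair [DecidableEq X] {x y : X} (h : x ≠ y) (α : X → ℝ) :
    locEnt {x, y} α = -(α x * Real.logb 2 (α x)) + -(α y * Real.logb 2 (α y)) :=
  sum_pair h

end MeasurementEntropy

section TwoStage

variable {ι Y : Type*} [Fintype ι] [DecidableEq ι] [DecidableEq Y]

def twoStageTest (F : ι → Finset Y) : Finset (ι × Y) :=
  univ.biUnion fun i => (F i).image fun y => (i, y)

variable (ι) in
/-- The Foulis–Randall product of the classical system with outcome set `ι` and the test space
`𝔄`, the classical test being performed first. -/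
def twoStage (𝔄 : Set (Finset Y)) : Set (Finset (ι × Y)) :=
  {T | ∃ F : ι → Finset Y, (∀ i, F i ∈ 𝔄) ∧ T = twoStageTest F}

theorem locEnt_twoStageTest (F : ι → Finset Y) (α : ι × Y → ℝ) :
    locEnt (twoStageTest F) α = ∑ i, locEnt (F i) fun y => α (i, y) := by
  rw [locEnt, twoStageTest, sum_biUnion]
  · refine sum_congr rfl fun i _ => sum_image fun y _ y' _ h => ?_
    exact (Prod.ext_iff.mp h).2
  · intro i _ j _ hij
    simp only [Function.onFun, disjoint_left, mem_image]
    rintro _ ⟨y, _, rfl⟩ ⟨y', _, h⟩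
    exact hij (congrArg Prod.fst h).symm

theorem twoStage_finite {𝔄 : Set (Finset Y)} (h𝔄 : 𝔄.Finite) : (twoStage ι 𝔄).Finite := by
  refine ((Set.Finite.pi fun _ : ι => h𝔄).image twoStageTest).subset ?_
  rintro _ ⟨F, hF, rfl⟩
  exact ⟨F, fun i _ => hF i, rfl⟩

theorem twoStage_nonempty {𝔄 : Set (Finset Y)} (hne : 𝔄.Nonempty) : (twoStage ι 𝔄).Nonempty :=
  ⟨_, fun _ => hne.some, fun _ => hne.some_mem, rfl⟩

theorem measEnt_twoStage {𝔄 : Set (Finset Y)} (h𝔄 : 𝔄.Finite) (hne : 𝔄.Nonempty)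
    (α : ι × Y → ℝ) : measEnt (twoStage ι 𝔄) α = ∑ i, measEnt 𝔄 fun y => α (i, y) := by
  choose E hE hEq hmin using fun i => exists_measEnt_eq_locEnt h𝔄 hne fun y => α (i, y)
  have hmem : twoStageTest E ∈ twoStage ι 𝔄 := ⟨E, hE, rfl⟩
  rw [measEnt_eq_locEnt_of_forall_le hmem, locEnt_twoStageTest]
  · exact sum_congr rfl fun i _ => (hEq i).symm
  · rintro _ ⟨F, hF, rfl⟩
    rw [locEnt_twoStageTest, locEnt_twoStageTest]
    exact sum_le_sum fun i _ => hmin i (F i) (hF i)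

end TwoStage

theorem testsAC_eq : testsAC = twoStage (Fin 2) squit := rfl

theorem testsABC_eq : testsABC = twoStage (Fin 2) (twoStage (Fin 2) squit) := by
  have key : ∀ F : Fin 2 → Fin 2 → Finset (Fin 4),
      (univ.biUnion fun a => univ.biUnion fun b => (F a b).image fun c => (a, b, c)) =
        twoStageTest fun a => twoStageTest (F a) := by
    intro F
    unfold twoStageTest
    simp only [biUnion_image, image_image]
    rfl
  ext T
  constructor
  · rintro ⟨F, hF, rfl⟩
    exact ⟨fun a => twoStageTest (F a), fun a => ⟨F a, hF a, rfl⟩, key F⟩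
  · rintro ⟨G, hG, rfl⟩
    choose F hF hGF using hG
    refine ⟨F, hF, ?_⟩
    rw [key]
    exact congrArg twoStageTest (funext hGF)

theorem squit_finite : squit.Finite := Set.toFinite _

theorem squit_nonempty : squit.Nonempty := ⟨_, Or.inl rfl⟩

theorem measEnt_squit (β : Fin 4 → ℝ) :
    measEnt squit β = min (-(β 0 * Real.logb 2 (β 0)) + -(β 1 * Real.logb 2 (β 1)))
      (-(β 2 * Real.logb 2 (β 2)) + -(β 3 * Real.logb 2 (β 3))) := by
  rw [squit, measEnt_pair, locEnt_pair (by decide), locEnt_pair (by decide)]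

theorem Real.logb_two_half : Real.logb 2 (1 / 2) = -1 := by
  rw [one_div, Real.logb_inv, Real.logb_self_eq_one one_lt_two]

theorem Real.logb_two_four : Real.logb 2 4 = 2 := by
  rw [show (4:ℝ) = 2 ^ 2 by norm_num, Real.logb_pow, Real.logb_self_eq_one one_lt_two]
  norm_num

theorem measEnt_ωC : measEnt squit ωC = 1 := by
  rw [measEnt_squit]
  simp [ωC, ωABC]
  norm_num [Real.logb_two_half]

theorem measEnt_squit_ωAC_slice (a : Fin 2) : measEnt squit (fun c => ωAC (a, c)) = 1 / 2 := by
  rw [measEnt_squit]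
  fin_cases a <;> simp [ωAC, ωABC] <;> norm_num [Real.logb_two_half, Real.logb_two_four]

theorem measEnt_squit_ωBC_slice (b : Fin 2) : measEnt squit (fun c => ωBC (b, c)) = 1 / 2 := by
  rw [measEnt_squit]
  fin_cases b <;> simp [ωBC, ωABC] <;> norm_num [Real.logb_two_half, Real.logb_two_four]

theorem measEnt_squit_ωABC_slice (a b : Fin 2) :
    measEnt squit (fun c => ωABC (a, b, c)) = 1 / 2 := by
  rw [measEnt_squit]
  fin_cases a <;> fin_cases b <;> simp [ωABC] <;> norm_num [Real.logb_two_four]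

theorem measEnt_ωAC : measEnt testsAC ωAC = 1 := by
  rw [testsAC_eq, measEnt_twoStage squit_finite squit_nonempty]
  simp only [measEnt_squit_ωAC_slice]
  norm_num

theorem measEnt_ωBC : measEnt testsAC ωBC = 1 := by
  rw [testsAC_eq, measEnt_twoStage squit_finite squit_nonempty]
  simp only [measEnt_squit_ωBC_slice]
  norm_num

theorem measEnt_ωABC : measEnt testsABC ωABC = 2 := by
  rw [testsABC_eq,
    measEnt_twoStage (twoStage_finite squit_finite) (twoStage_nonempty squit_nonempty)]
  simp only [measEnt_twoStage squit_finite squit_nonempty, measEnt_squit_ωABC_slice]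
  norm_num

/-- failure of strong subadditivity of the measurement entropy:
H(C) = H(AC) = H(BC) = 1, H(ABC) = 2, hence I(A:B|C) = −1 < 0. -/
theorem failure_of_strong_subadditivity :
    measEnt squit ωC = 1 ∧
    measEnt testsAC ωAC = 1 ∧
    measEnt testsAC ωBC = 1 ∧
    measEnt testsABC ωABC = 2 ∧
    measEnt testsAC ωAC + measEnt testsAC ωBC - measEnt squit ωC -
        measEnt testsABC ωABC = -1 ∧
    (-1 : ℝ) < 0 := by
  refine ⟨measEnt_ωC, measEnt_ωAC, measEnt_ωBC, measEnt_ωABC, ?_, by norm_num⟩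
  rw [measEnt_ωC, measEnt_ωAC, measEnt_ωBC, measEnt_ωABC]
  norm_num
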